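/- Suppose ω : [0, a*σ] → ℝ is nonnegative, nondecreasing, concave, differentiable on (0, a*σ] with everywhere positive right derivative at 0, and σ > 0. Then the maximization problem max_{ε ∈ [0, a*σ]} ω(ε)·Φ(−ε/σ) has a unique solution, and this solution is nonzero if and only if σ > 2φ(0)·ω(0)/ω'(0), where ω'(0) is the right derivative of ω at 0. -/

import Mathlib

noncomputable def stdGaussianPDF (x : ℝ) : ℝ :=
  (Real.sqrt (2 * Real.pi))⁻¹ * Real.exp (-(x ^ 2) / 2)

noncomputable def stdGaussianCDF (x : ℝ) : ℝ :=
  ∫ t in Set.Iic x, stdGaussianPDF t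

/-!
Write `f ε = ω ε * Φ (-(ε / σ))`. Where `f` is positive, `log f = log ω + log Φ (-(· / σ))`
is strictly concave: the logarithm of a positive concave function is concave, and `log Φ` is
strictly concave because its derivative `φ / Φ` is strictly decreasing, which is Mills'
inequality `φ x + x Φ x > 0`. The maximum over the compact interval `[0, a* σ]` exists and is
positive (`ω (a* σ) > 0` since `ω` increases at `0`), so every maximizer lies where `log f` is
strictly concave, hence it is unique. If `ω 0 = 0` then `f 0 = 0` and the maximizer is not `0`.
If `ω 0 > 0`, concavity of `log f` on all of `[0, a* σ]` makes `0` the maximizer exactly when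
the right derivative `f' 0 = ω' 0 / 2 - ω 0 φ 0 / σ` is nonpositive.
-/

open Set Filter Topology MeasureTheory Real ProbabilityTheory

lemma ConcaveOn.isMaxOn_Icc_left_iff {g : ℝ → ℝ} {a b d : ℝ} (hab : a < b)
    (hg : ConcaveOn ℝ (Icc a b) g) (hd : HasDerivWithinAt g d (Icc a b) a) :
    IsMaxOn g (Icc a b) a ↔ d ≤ 0 := by
  constructor
  · intro hmax
    have hd' : HasDerivWithinAt g d (Ioi a) a :=
      hd.mono_of_mem_nhdsWithin (mem_of_superset (Ioo_mem_nhdsGT hab) Ioo_subset_Icc_self)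
    refine le_of_tendsto ((hasDerivWithinAt_iff_tendsto_slope' self_notMem_Ioi).1 hd') ?_
    filter_upwards [Ioo_mem_nhdsGT hab] with t ht
    rw [slope_def_field]
    exact div_nonpos_of_nonpos_of_nonneg (sub_nonpos.2 (hmax (Ioo_subset_Icc_self ht)))
      (sub_nonneg.2 ht.1.le)
  · refine fun hd0 => isMaxOn_iff.2 fun x hx => ?_
    rcases hx.1.eq_or_lt with rfl | hax
    · exact le_rfl
    · have h := (hg.slope_le_of_hasDerivWithinAt (left_mem_Icc.2 hab.le) hx hax hd).trans hd0
      rw [slope_def_field, div_le_iff₀ (sub_pos.2 hax), zero_mul, sub_nonpos] at h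
      exact h

lemma isMaxOn_Icc_left_iff_of_concaveOn_log {f : ℝ → ℝ} {a b d : ℝ} (hab : a < b)
    (hpos : ∀ x ∈ Icc a b, 0 < f x) (hlog : ConcaveOn ℝ (Icc a b) fun x => log (f x))
    (hd : HasDerivWithinAt f d (Icc a b) a) : IsMaxOn f (Icc a b) a ↔ d ≤ 0 := by
  have ha := hpos a (left_mem_Icc.2 hab.le)
  have hmax : IsMaxOn f (Icc a b) a ↔ IsMaxOn (fun x => log (f x)) (Icc a b) a := by
    simp only [isMaxOn_iff]
    exact forall₂_congr fun x hx => (log_le_log_iff (hpos x hx) ha).symm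
  rw [hmax, hlog.isMaxOn_Icc_left_iff hab (hd.log ha.ne'), div_le_iff₀ ha, zero_mul]

lemma ConcaveOn.strictConcaveOn_log_mul {E : Type*} [AddCommGroup E] [Module ℝ E] {s : Set E}
    {ω q : E → ℝ} (hω : ConcaveOn ℝ s ω) (hq : ∀ x ∈ s, 0 < q x)
    (hlogq : StrictConcaveOn ℝ s fun x => log (q x)) :
    StrictConcaveOn ℝ {x ∈ s | 0 < ω x * q x} fun x => log (ω x * q x) := by
  have hset : {x ∈ s | 0 < ω x * q x} = {x ∈ s | 0 < ω x} :=
    sep_ext_iff.2 fun x hx => mul_pos_iff_of_pos_right (hq x hx)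
  rw [hset]
  have hconv := hω.convex_gt 0
  have hlogω : ConcaveOn ℝ {x ∈ s | 0 < ω x} fun x => log (ω x) :=
    ⟨hconv, fun x hx y hy a b ha hb hab =>
      (strictConcaveOn_log_Ioi.concaveOn.2 hx.2 hy.2 ha hb hab).trans
        (log_le_log (strictConcaveOn_log_Ioi.1 hx.2 hy.2 ha hb hab) (hω.2 hx.1 hy.1 ha hb hab))⟩
  exact (hlogω.add_strictConcaveOn (hlogq.subset (sep_subset s _) hconv)).congr fun x hx =>
    (log_mul hx.2.ne' (hq x hx.1).ne').symm

lemma eq_of_isMaxOn_of_strictConcaveOn_log {E : Type*} [AddCommGroup E] [Module ℝ E]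
    {s : Set E} {f : E → ℝ} {a b : E}
    (hf : StrictConcaveOn ℝ {x ∈ s | 0 < f x} fun x => log (f x))
    (ha : a ∈ s) (hb : b ∈ s) (hfa : 0 < f a) (hmaxa : IsMaxOn f s a) (hmaxb : IsMaxOn f s b) :
    a = b := by
  have hlog : ∀ c, IsMaxOn f s c → IsMaxOn (fun x => log (f x)) {x ∈ s | 0 < f x} c :=
    fun c hmax x hx => log_le_log hx.2 (hmax hx.1)
  have hfb : 0 < f b := hfa.trans_le (hmaxb ha)
  exact hf.eq_of_isMaxOn (hlog a hmaxa) (hlog b hmaxb) ⟨ha, hfa⟩ ⟨hb, hfb⟩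

lemma stdGaussianPDF_eq_gaussianPDFReal : stdGaussianPDF = gaussianPDFReal 0 1 := by
  ext x
  simp [stdGaussianPDF, gaussianPDFReal]

lemma stdGaussianPDF_pos (x : ℝ) : 0 < stdGaussianPDF x := by
  unfold stdGaussianPDF
  positivity

lemma stdGaussianPDF_neg (x : ℝ) : stdGaussianPDF (-x) = stdGaussianPDF x := by
  simp [stdGaussianPDF]

lemma continuous_stdGaussianPDF : Continuous stdGaussianPDF := by
  unfold stdGaussianPDF
  fun_prop

lemma integrable_stdGaussianPDF : Integrable stdGaussianPDF :=
  stdGaussianPDF_eq_gaussianPDFReal ▸ integrable_gaussianPDFReal 0 1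

lemma integral_stdGaussianPDF : ∫ x, stdGaussianPDF x = 1 :=
  stdGaussianPDF_eq_gaussianPDFReal ▸ integral_gaussianPDFReal_eq_one 0 one_ne_zero

lemma hasDerivAt_stdGaussianPDF (x : ℝ) :
    HasDerivAt stdGaussianPDF (-x * stdGaussianPDF x) x := by
  have h : HasDerivAt (fun t : ℝ => -(t ^ 2) / 2) (-x) x :=
    ((hasDerivAt_pow 2 x).neg.div_const 2).congr_deriv (by ring)
  exact (h.exp.const_mul (√(2 * π))⁻¹).congr_deriv (by simp only [stdGaussianPDF]; ring)

lemma tendsto_stdGaussianPDF_atBot : Tendsto stdGaussianPDF atBot (𝓝 0) := by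
  have h : Tendsto (fun x : ℝ => -(x ^ 2) / 2) atTop atBot :=
    (tendsto_neg_atTop_atBot.comp (tendsto_pow_atTop two_ne_zero)).atBot_div_const two_pos
  have hTop : Tendsto stdGaussianPDF atTop (𝓝 0) :=
    mul_zero (√(2 * π))⁻¹ ▸ (tendsto_exp_atBot.comp h).const_mul _
  simpa [Function.comp_def, stdGaussianPDF_neg] using hTop.comp tendsto_neg_atBot_atTop

lemma integrable_mul_stdGaussianPDF : Integrable fun t => t * stdGaussianPDF t := by
  refine ((integrable_mul_exp_neg_mul_sq (by norm_num : (0 : ℝ) < 1 / 2)).const_mul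
    (√(2 * π))⁻¹).congr (.of_forall fun t => ?_)
  simp only [stdGaussianPDF]
  ring_nf

lemma integral_Iic_mul_stdGaussianPDF (x : ℝ) :
    ∫ t in Iic x, t * stdGaussianPDF t = -stdGaussianPDF x := by
  have h := integral_Iic_of_hasDerivAt_of_tendsto (f := fun t => -stdGaussianPDF t) (a := x)
    continuous_stdGaussianPDF.neg.continuousWithinAt
    (fun t _ => (hasDerivAt_stdGaussianPDF t).neg.congr_deriv (by ring))
    integrable_mul_stdGaussianPDF.integrableOn tendsto_stdGaussianPDF_atBot.neg
  simpa using h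

lemma stdGaussianCDF_pos (x : ℝ) : 0 < stdGaussianCDF x := by
  rw [stdGaussianCDF, setIntegral_pos_iff_support_of_nonneg_ae
    (.of_forall fun t => (stdGaussianPDF_pos t).le) integrable_stdGaussianPDF.integrableOn,
    (Function.support_eq_univ fun t => (stdGaussianPDF_pos t).ne'), univ_inter]
  simp

lemma stdGaussianCDF_add_stdGaussianCDF_neg (x : ℝ) :
    stdGaussianCDF x + stdGaussianCDF (-x) = 1 := by
  have hneg : stdGaussianCDF (-x) = ∫ t in Ioi x, stdGaussianPDF t := by
    rw [stdGaussianCDF, ← integral_comp_neg_Ioi]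
    simp only [stdGaussianPDF_neg]
  rw [hneg, stdGaussianCDF, intervalIntegral.integral_Iic_add_Ioi
    integrable_stdGaussianPDF.integrableOn integrable_stdGaussianPDF.integrableOn,
    integral_stdGaussianPDF]

lemma stdGaussianCDF_zero : stdGaussianCDF 0 = 1 / 2 := by
  have h := stdGaussianCDF_add_stdGaussianCDF_neg 0
  rw [neg_zero] at h
  linarith

lemma hasDerivAt_stdGaussianCDF (x : ℝ) :
    HasDerivAt stdGaussianCDF (stdGaussianPDF x) x := by
  have hint := integrable_stdGaussianPDF.integrableOn (s := Iic (0 : ℝ))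
  have key :
      (fun y => stdGaussianCDF 0 + ∫ t in (0 : ℝ)..y, stdGaussianPDF t) = stdGaussianCDF := by
    ext y
    rw [stdGaussianCDF, stdGaussianCDF, ← intervalIntegral.integral_Iic_sub_Iic hint
      integrable_stdGaussianPDF.integrableOn]
    ring
  rw [← key]
  exact (intervalIntegral.integral_hasDerivAt_right
    (continuous_stdGaussianPDF.intervalIntegrable _ _)
    (continuous_stdGaussianPDF.stronglyMeasurableAtFilter _ _)
    continuous_stdGaussianPDF.continuousAt).const_add _

lemma continuous_stdGaussianCDF : Continuous stdGaussianCDF :=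
  continuous_iff_continuousAt.2 fun x => (hasDerivAt_stdGaussianCDF x).continuousAt

/-- Mills' inequality. -/
lemma stdGaussianPDF_add_mul_stdGaussianCDF_pos (x : ℝ) :
    0 < stdGaussianPDF x + x * stdGaussianCDF x := by
  set u : ℝ → ℝ := fun y => stdGaussianPDF y + y * stdGaussianCDF y
  have hu : ∀ y, HasDerivAt u (stdGaussianCDF y) y := fun y =>
    ((hasDerivAt_stdGaussianPDF y).add ((hasDerivAt_id' y).mul
      (hasDerivAt_stdGaussianCDF y))).congr_deriv (by ring)
  have hmono : StrictMono u := strictMono_of_deriv_pos fun y => by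
    rw [(hu y).deriv]
    exact stdGaussianCDF_pos y
  have hnonneg : 0 ≤ u (x - 1) := by
    have h : ∫ t in Iic (x - 1), t * stdGaussianPDF t ≤
        ∫ t in Iic (x - 1), (x - 1) * stdGaussianPDF t :=
      setIntegral_mono_on integrable_mul_stdGaussianPDF.integrableOn
        (integrable_stdGaussianPDF.const_mul _).integrableOn measurableSet_Iic
        fun t ht => mul_le_mul_of_nonneg_right ht (stdGaussianPDF_pos t).le
    rw [integral_Iic_mul_stdGaussianPDF, integral_const_mul] at h
    simp only [u, stdGaussianCDF]
    linarith
  exact hnonneg.trans_lt (hmono (sub_one_lt x))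

lemma strictConcaveOn_log_stdGaussianCDF :
    StrictConcaveOn ℝ univ fun x => log (stdGaussianCDF x) := by
  have hd : ∀ x, HasDerivAt (fun x => log (stdGaussianCDF x))
      (stdGaussianPDF x / stdGaussianCDF x) x := fun x =>
    (hasDerivAt_stdGaussianCDF x).log (stdGaussianCDF_pos x).ne'
  refine StrictAnti.strictConcaveOn_univ_of_deriv
    (continuous_stdGaussianCDF.log fun x => (stdGaussianCDF_pos x).ne') ?_
  rw [funext fun x => (hd x).deriv]
  refine strictAnti_of_deriv_neg fun x => ?_
  have hΦ := stdGaussianCDF_pos x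
  have h := (hasDerivAt_stdGaussianPDF x).div (hasDerivAt_stdGaussianCDF x) hΦ.ne'
  rw [show (fun x => stdGaussianPDF x / stdGaussianCDF x) = stdGaussianPDF / stdGaussianCDF
    from rfl, h.deriv]
  have hnum : -x * stdGaussianPDF x * stdGaussianCDF x - stdGaussianPDF x * stdGaussianPDF x
      = -(stdGaussianPDF x * (stdGaussianPDF x + x * stdGaussianCDF x)) := by ring
  rw [hnum, neg_div, neg_lt_zero]
  exact div_pos (mul_pos (stdGaussianPDF_pos x) (stdGaussianPDF_add_mul_stdGaussianCDF_pos x))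
    (pow_pos hΦ 2)

lemma hasDerivAt_stdGaussianCDF_neg_div (σ x : ℝ) :
    HasDerivAt (fun y => stdGaussianCDF (-(y / σ))) (-(stdGaussianPDF (x / σ) / σ)) x :=
  ((hasDerivAt_stdGaussianCDF _).comp x ((hasDerivAt_id' x).div_const σ).neg).congr_deriv
    (by simp only [Pi.neg_apply, stdGaussianPDF_neg]; ring)

lemma strictConcaveOn_log_stdGaussianCDF_neg_div {σ : ℝ} (hσ : 0 < σ) :
    StrictConcaveOn ℝ univ fun x => log (stdGaussianCDF (-(x / σ))) := by
  refine ⟨convex_univ, fun x _ y _ hxy a b ha hb hab => ?_⟩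
  have hne : -(x / σ) ≠ -(y / σ) := by
    rwa [ne_eq, neg_inj, div_left_inj' hσ.ne']
  convert strictConcaveOn_log_stdGaussianCDF.2 (mem_univ _) (mem_univ _) hne ha hb hab using 3
  simp only [smul_eq_mul]
  ring

lemma ConcaveOn.strictConcaveOn_log_mul_stdGaussianCDF {σ : ℝ} {s : Set ℝ} {ω : ℝ → ℝ}
    (hσ : 0 < σ) (hω : ConcaveOn ℝ s ω) :
    StrictConcaveOn ℝ {x ∈ s | 0 < ω x * stdGaussianCDF (-(x / σ))}
      fun x => log (ω x * stdGaussianCDF (-(x / σ))) :=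
  hω.strictConcaveOn_log_mul (fun _ _ => stdGaussianCDF_pos _)
    ((strictConcaveOn_log_stdGaussianCDF_neg_div hσ).subset (subset_univ s) hω.1)

lemma isMaxOn_mul_stdGaussianCDF_zero_iff {σ M d : ℝ} {ω : ℝ → ℝ} (hσ : 0 < σ) (hM : 0 < M)
    (hω : ConcaveOn ℝ (Icc 0 M) ω) (hmono : MonotoneOn ω (Icc 0 M)) (hω0 : 0 < ω 0)
    (hd : HasDerivWithinAt ω d (Icc 0 M) 0) :
    IsMaxOn (fun x => ω x * stdGaussianCDF (-(x / σ))) (Icc 0 M) 0 ↔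
      σ * d ≤ 2 * stdGaussianPDF 0 * ω 0 := by
  have hpos : ∀ x ∈ Icc 0 M, 0 < ω x * stdGaussianCDF (-(x / σ)) := fun x hx =>
    mul_pos (hω0.trans_le (hmono (left_mem_Icc.2 hM.le) hx hx.1)) (stdGaussianCDF_pos _)
  have hd' : HasDerivWithinAt (fun x => ω x * stdGaussianCDF (-(x / σ)))
      (d / 2 - ω 0 * stdGaussianPDF 0 / σ) (Icc 0 M) 0 :=
    (hd.mul (hasDerivAt_stdGaussianCDF_neg_div σ 0).hasDerivWithinAt).congr_deriv
      (by simp only [zero_div, neg_zero, stdGaussianCDF_zero]; ring)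
  have hlog : ConcaveOn ℝ (Icc 0 M) fun x => log (ω x * stdGaussianCDF (-(x / σ))) :=
    sep_eq_self_iff_mem_true.2 hpos ▸ (hω.strictConcaveOn_log_mul_stdGaussianCDF hσ).concaveOn
  rw [isMaxOn_Icc_left_iff_of_concaveOn_log hM hpos hlog hd', sub_nonpos, le_div_iff₀ hσ]
  constructor <;> intro h <;> linarith

theorem unique_solution_modulus_max_general (σ astar : ℝ) (hσ : 0 < σ)
    (hmax : ∀ a, 0 ≤ a → a * stdGaussianCDF (-a) ≤ astar * stdGaussianCDF (-astar))
    (ω ω' : ℝ → ℝ)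
    (hnonneg : ∀ ε ∈ Set.Icc 0 (astar * σ), 0 ≤ ω ε)
    (hmono : MonotoneOn ω (Set.Icc 0 (astar * σ)))
    (hconc : ConcaveOn ℝ (Set.Icc 0 (astar * σ)) ω)
    (hderiv : ∀ ε ∈ Set.Ioc 0 (astar * σ), HasDerivAt ω (ω' ε) ε)
    (hderiv0 : HasDerivWithinAt ω (ω' 0) (Set.Ici 0) 0)
    (hpos0 : 0 < ω' 0) :
    ∃ εs ∈ Set.Icc 0 (astar * σ),
      (∀ ε ∈ Set.Icc 0 (astar * σ),
        ω ε * stdGaussianCDF (-(ε / σ)) ≤ ω εs * stdGaussianCDF (-(εs / σ))) ∧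
      (∀ ε ∈ Set.Icc 0 (astar * σ),
        (∀ ε' ∈ Set.Icc 0 (astar * σ),
          ω ε' * stdGaussianCDF (-(ε' / σ)) ≤ ω ε * stdGaussianCDF (-(ε / σ))) → ε = εs) ∧
      (εs ≠ 0 ↔ 2 * stdGaussianPDF 0 * (ω 0 / ω' 0) < σ) := by
  have hastar : 0 < astar := pos_of_mul_pos_left
    ((mul_pos one_pos (stdGaussianCDF_pos _)).trans_le (hmax 1 zero_le_one))
    (stdGaussianCDF_pos _).le
  have hM : 0 < astar * σ := mul_pos hastar hσ
  set M := astar * σ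
  set f : ℝ → ℝ := fun ε => ω ε * stdGaussianCDF (-(ε / σ))
  have h0M : (0 : ℝ) ∈ Icc 0 M := left_mem_Icc.2 hM.le
  have hω_cont : ContinuousOn ω (Icc 0 M) := fun x hx => hx.1.eq_or_lt.elim
    (fun h => h ▸ hderiv0.continuousWithinAt.mono Icc_subset_Ici_self)
    fun h => (hderiv x ⟨h, hx.2⟩).continuousAt.continuousWithinAt
  obtain ⟨εs, hεs, hεs_max⟩ := isCompact_Icc.exists_isMaxOn (nonempty_Icc.2 hM.le)
    (hω_cont.mul (continuous_stdGaussianCDF.comp (continuous_id.div_const σ).neg).continuousOn)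
  have hω0' : HasDerivWithinAt ω (ω' 0) (Icc 0 M) 0 := hderiv0.mono Icc_subset_Ici_self
  have hωM : 0 < ω M := by
    obtain ⟨t, ht, hlt⟩ : ∃ t ∈ Icc 0 M, ω 0 < ω t := by
      simpa [isMaxOn_iff, and_assoc] using
        mt (hconc.isMaxOn_Icc_left_iff hM hω0').1 hpos0.not_ge
    exact (hnonneg 0 h0M).trans_lt (hlt.trans_le (hmono ht (right_mem_Icc.2 hM.le) ht.2))
  have hfεs : 0 < f εs :=
    (mul_pos hωM (stdGaussianCDF_pos _)).trans_le (hεs_max (right_mem_Icc.2 hM.le))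
  have huniq : ∀ ε ∈ Icc 0 M, IsMaxOn f (Icc 0 M) ε → ε = εs := fun ε hε hε_max =>
    eq_of_isMaxOn_of_strictConcaveOn_log (hconc.strictConcaveOn_log_mul_stdGaussianCDF hσ)
      hε hεs (hfεs.trans_le (hε_max hεs)) hε_max hεs_max
  refine ⟨εs, hεs, hεs_max, huniq, ?_⟩
  rcases (hnonneg 0 h0M).eq_or_lt with hω0 | hω0
  · rw [← hω0, zero_div, mul_zero]
    exact iff_of_true (fun h => by simp [f, h, ← hω0] at hfεs) hσ
  · rw [ne_eq, show εs = 0 ↔ IsMaxOn f (Icc 0 M) 0 from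
      ⟨fun h => h ▸ hεs_max, fun h => (huniq 0 h0M h).symm⟩,
      isMaxOn_mul_stdGaussianCDF_zero_iff hσ hM hconc hmono hω0 hω0', not_le, mul_div_assoc',
      div_lt_iff₀ hpos0, mul_comm σ]

/-- Let `ω : [0, a*σ] → ℝ` be nonnegative, nondecreasing, concave, differentiable on
`(0, a*σ]` with positive right derivative `ω'(0)` at `0`, and `σ > 0`, where `a*` is
the unique maximizer of `a·Φ(−a)` over `[0, ∞)`. Then `max_{ε ∈ [0, a*σ]} ω(ε)·Φ(−ε/σ)`
has a unique solution, and this solution is nonzero iff `σ > 2φ(0)·ω(0)/ω'(0)`. -/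
theorem unique_solution_modulus_max (σ astar : ℝ) (hσ : 0 < σ)
    (hastar0 : 0 ≤ astar)
    (hmax : ∀ a, 0 ≤ a → a * stdGaussianCDF (-a) ≤ astar * stdGaussianCDF (-astar))
    (huniq : ∀ a, 0 ≤ a →
      (∀ b, 0 ≤ b → b * stdGaussianCDF (-b) ≤ a * stdGaussianCDF (-a)) → a = astar)
    (ω ω' : ℝ → ℝ)
    (hnonneg : ∀ ε ∈ Set.Icc 0 (astar * σ), 0 ≤ ω ε)
    (hmono : MonotoneOn ω (Set.Icc 0 (astar * σ)))
    (hconc : ConcaveOn ℝ (Set.Icc 0 (astar * σ)) ω)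
    (hderiv : ∀ ε ∈ Set.Ioc 0 (astar * σ), HasDerivAt ω (ω' ε) ε)
    (hderiv0 : HasDerivWithinAt ω (ω' 0) (Set.Ici 0) 0)
    (hpos0 : 0 < ω' 0) :
    ∃ εs ∈ Set.Icc 0 (astar * σ),
      (∀ ε ∈ Set.Icc 0 (astar * σ),
        ω ε * stdGaussianCDF (-(ε / σ)) ≤ ω εs * stdGaussianCDF (-(εs / σ))) ∧
      (∀ ε ∈ Set.Icc 0 (astar * σ),
        (∀ ε' ∈ Set.Icc 0 (astar * σ),
          ω ε' * stdGaussianCDF (-(ε' / σ)) ≤ ω ε * stdGaussianCDF (-(ε / σ))) → ε = εs) ∧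
      (εs ≠ 0 ↔ 2 * stdGaussianPDF 0 * (ω 0 / ω' 0) < σ) :=
  unique_solution_modulus_max_general σ astar hσ hmax ω ω' hnonneg hmono hconc hderiv hderiv0 hpos0
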